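/- If f ∈ L²[0,1] is supported in a set e_k belonging to the σ-algebra F_{k−1}, then for every 1 ≤ l ≤ p_k − 1 the function Δ_{k,l} f is also supported in e_k (i.e., Δ_{k,l} f = 0 almost everywhere outside e_k). -/

import Mathlib

open MeasureTheory Finset

noncomputable section

/-- Partial products: `vm p 0 = 1`, `vm p k = p 0 * p 1 * ... * p (k-1)`
(so `vm p k` is the paper's `m_k` with `p i` the paper's `p_{i+1}`). -/
def vm (p : ℕ → ℕ) : ℕ → ℕ
  | 0 => 1
  | k+1 => vm p k * p k

/-- The `i`-th mixed-radix digit of `n` (0-indexed: this is the paper's `α_{i+1}`). -/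
def vdigit (p : ℕ → ℕ) (n i : ℕ) : ℕ := n / vm p i % p i

/-- Digitwise addition mod `p i` of the mixed-radix digits (the paper's `k ∔ l`). -/
def vadd (p : ℕ → ℕ) (a b : ℕ) : ℕ :=
  ∑ i ∈ Finset.range (a + b + 1), (vdigit p a i + vdigit p b i) % p i * vm p i

/-- Digitwise negation: the inverse of `a` with respect to `vadd`. -/
def vneg (p : ℕ → ℕ) (a : ℕ) : ℕ :=
  ∑ i ∈ Finset.range (a + 1), (p i - vdigit p a i) % p i * vm p i

/-- Digitwise subtraction (the paper's `n ∸ a`). -/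
def vsub (p : ℕ → ℕ) (a b : ℕ) : ℕ := vadd p a (vneg p b)

/-- The generalized Rademacher function `rad p k = r_{k+1}`:
constant on `[j/m_{k+1}, (j+1)/m_{k+1})` with value `exp(2πi (j mod p_{k+1}) / p_{k+1})`. -/
def rad (p : ℕ → ℕ) (k : ℕ) (x : ℝ) : ℂ :=
  Complex.exp (2 * Real.pi * Complex.I *
    ((⌊x * (vm p (k+1) : ℝ)⌋ % (p k : ℤ) : ℤ) : ℂ) / (p k : ℂ))

/-- The Vilenkin function `w_n = ∏ r_{i+1}^{α_{i+1}}` where `α` are the digits of `n`. -/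
def vw (p : ℕ → ℕ) (n : ℕ) (x : ℝ) : ℂ :=
  ∏ i ∈ Finset.range (n + 1), rad p i x ^ vdigit p n i

/-- The Vilenkin–Fourier coefficient `(f, w_n)`. -/
def vip (p : ℕ → ℕ) (f : ℝ → ℂ) (n : ℕ) : ℂ :=
  ∫ x in Set.Ico (0:ℝ) 1, f x * (starRingEnd ℂ) (vw p n x)

/-- `E_k f = ∑_{n < m_k} (f, w_n) w_n`. -/
def vE (p : ℕ → ℕ) (k : ℕ) (f : ℝ → ℂ) (x : ℝ) : ℂ :=
  ∑ n ∈ Finset.range (vm p k), vip p f n * vw p n x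

/-- The martingale difference `Δ_k f = E_k f - E_{k-1} f` (for `k ≥ 1`). -/
def vD (p : ℕ → ℕ) (k : ℕ) (f : ℝ → ℂ) (x : ℝ) : ℂ :=
  vE p k f x - vE p (k-1) f x

/-- The block projection `Δ_{k,l} f = ∑_{n = l·m_{k-1}}^{(l+1)m_{k-1}-1} (f, w_n) w_n`. -/
def vDkl (p : ℕ → ℕ) (k l : ℕ) (f : ℝ → ℂ) (x : ℝ) : ℂ :=
  ∑ n ∈ Finset.Ico (l * vm p (k-1)) ((l+1) * vm p (k-1)), vip p f n * vw p n x

/-- The martingale square function `S f = (|Δ_0 f|² + ∑_{k≥1} |Δ_k f|²)^{1/2}`. -/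
def vS (p : ℕ → ℕ) (f : ℝ → ℂ) (x : ℝ) : ℝ :=
  Real.sqrt (‖vE p 0 f x‖^2 + ∑' k : ℕ, ‖vD p (k+1) f x‖^2)

/-- The Vilenkin square function
`S̃ f = (|Δ_0 f|² + ∑_{k≥1} ∑_{l=1}^{p_k-1} |Δ_{k,l} f|²)^{1/2}`. -/
def vtS (p : ℕ → ℕ) (f : ℝ → ℂ) (x : ℝ) : ℝ :=
  Real.sqrt (‖vE p 0 f x‖^2 + ∑' k : ℕ, ∑ l ∈ Finset.Ico 1 (p k), ‖vDkl p (k+1) l f x‖^2)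

/-!
Writing `(f, w_n) w_n(x)` as an integral against `f(y)` gives `Δ_{k,l} f(x) = ∫ f(y) K(x, y) dy`
with `K(x, y) = (r_k(x) \overline{r_k(y)})^l D_{m_{k-1}}(x, y)`, since
`w_{l m_{k-1} + j} = w_j r_k^l`.
The Dirichlet kernel satisfies
`D_{m_{i+1}}(x, y) = D_{m_i}(x, y) · ∑_{a < p_{i+1}} (r_{i+1}(x) \overline{r_{i+1}(y)})^a`,
and the geometric sum vanishes when `x` and `y` have different `(i+1)`-th digits, being a full sum
of powers of a nontrivial `p_{i+1}`-th root of unity. Hence `D_{m_{k-1}}(x, y) = 0` unless `x`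
and `y` lie in the same atom of `F_{k-1}`: for `x ∉ e` the kernel kills `y ∈ e`, and `f` kills
`y ∉ e`.
-/

namespace Finset

theorem sum_range_mul_eq_sum_sum_Ico {M : Type*} [AddCommMonoid M] (f : ℕ → M) (m q : ℕ) :
    ∑ j ∈ range (m * q), f j = ∑ a ∈ range q, ∑ j ∈ Ico (a * m) ((a + 1) * m), f j := by
  induction q with
  | zero => simp
  | succ q ih =>
    rw [sum_range_succ, ← ih, Nat.mul_comm m q, Nat.mul_comm m (q + 1),
      sum_range_add_sum_Ico _ (Nat.mul_le_mul_right m q.le_succ)]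

end Finset

theorem mem_Ico_div_iff_floor_mul_eq {m : ℝ} (hm : 0 < m) (j : ℕ) (y : ℝ) :
    y ∈ Set.Ico ((j : ℝ) / m) ((j + 1 : ℝ) / m) ↔ ⌊y * m⌋ = j := by
  rw [Set.mem_Ico, div_le_iff₀ hm, lt_div_iff₀ hm, Int.floor_eq_iff]
  push_cast
  constructor <;> rintro ⟨h₁, h₂⟩ <;> constructor <;> linarith

variable {p : ℕ → ℕ}

theorem vm_pos (hp : ∀ i, 0 < p i) (k : ℕ) : 0 < vm p k := by
  induction k with
  | zero => exact Nat.one_pos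
  | succ k ih => exact Nat.mul_pos ih (hp k)

theorem vm_dvd_vm {i j : ℕ} (h : i ≤ j) : vm p i ∣ vm p j := by
  induction h with
  | refl => rfl
  | step _ ih => exact ih.trans (Nat.dvd_mul_right _ _)

theorem lt_vm_self (hp : ∀ i, 2 ≤ p i) (n : ℕ) : n < vm p n := by
  refine n.lt_two_pow_self.trans_le ?_
  induction n with
  | zero => rfl
  | succ n ih => exact Nat.mul_le_mul ih (hp n)

theorem vdigit_eq_zero_of_lt {n i : ℕ} (h : n < vm p i) : vdigit p n i = 0 := by
  simp [vdigit, Nat.div_eq_of_lt h]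

theorem vdigit_mul_vm_add_of_lt (hp : ∀ i, 0 < p i) {a j K i : ℕ} (hi : i < K) :
    vdigit p (a * vm p K + j) i = vdigit p j i := by
  obtain ⟨c, hc⟩ := vm_dvd_vm (p := p) hi
  have : a * vm p K + j = j + vm p i * (p i * (a * c)) := by
    rw [hc, vm]; ring
  rw [vdigit, vdigit, this, Nat.add_mul_div_left _ _ (vm_pos hp i), Nat.add_mul_mod_self_left]

theorem vdigit_mul_vm_add_self (hp : ∀ i, 0 < p i) {a j K : ℕ} (hj : j < vm p K)
    (ha : a < p K) : vdigit p (a * vm p K + j) K = a := by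
  rw [vdigit, Nat.mul_comm a, Nat.mul_add_div (vm_pos hp K), Nat.div_eq_of_lt hj, add_zero,
    Nat.mod_eq_of_lt ha]

theorem prod_range_rad_pow_vdigit_eq (hp : ∀ i, 0 < p i) {n N A : ℕ} (hNA : N ≤ A)
    (hn : n < vm p N) (x : ℝ) :
    ∏ i ∈ range A, rad p i x ^ vdigit p n i = ∏ i ∈ range N, rad p i x ^ vdigit p n i := by
  refine (prod_subset (range_subset_range.2 hNA) fun i _ hi => ?_).symm
  have hNi : vm p N ≤ vm p i := Nat.le_of_dvd (vm_pos hp i) (vm_dvd_vm (by simpa using hi))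
  rw [vdigit_eq_zero_of_lt (hn.trans_le hNi), pow_zero]

theorem vw_eq_prod_range (hp : ∀ i, 2 ≤ p i) {n M : ℕ} (hn : n < vm p M) (x : ℝ) :
    vw p n x = ∏ i ∈ range M, rad p i x ^ vdigit p n i := by
  have hp₀ : ∀ i, 0 < p i := fun i => by linarith [hp i]
  have hmin : n < vm p (min M n) := by
    rcases le_total M n with h | h
    · rwa [min_eq_left h]
    · rw [min_eq_right h]; exact lt_vm_self hp n
  rw [vw, prod_range_rad_pow_vdigit_eq hp₀ ((min_le_right M n).trans n.le_succ) hmin,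
    prod_range_rad_pow_vdigit_eq hp₀ (min_le_left M n) hmin]

theorem vw_mul_vm_add (hp : ∀ i, 2 ≤ p i) {a j K : ℕ} (hj : j < vm p K) (ha : a < p K)
    (x : ℝ) : vw p (a * vm p K + j) x = vw p j x * rad p K x ^ a := by
  have hp₀ : ∀ i, 0 < p i := fun i => by linarith [hp i]
  have hlt : a * vm p K + j < vm p (K + 1) :=
    calc a * vm p K + j < (a + 1) * vm p K := by linarith
      _ ≤ p K * vm p K := Nat.mul_le_mul_right _ ha
      _ = vm p (K + 1) := Nat.mul_comm _ _
  rw [vw_eq_prod_range hp hlt, vw_eq_prod_range hp hj, prod_range_succ,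
    vdigit_mul_vm_add_self hp₀ hj ha]
  congr 1
  exact prod_congr rfl fun i hi => by rw [vdigit_mul_vm_add_of_lt hp₀ (mem_range.1 hi)]

theorem norm_rad (i : ℕ) (x : ℝ) : ‖rad p i x‖ = 1 := by
  rw [rad, Complex.norm_exp]
  simp [Complex.div_re]

theorem norm_vw (n : ℕ) (x : ℝ) : ‖vw p n x‖ = 1 := by
  rw [vw, norm_prod]
  exact prod_eq_one fun i _ => by rw [norm_pow, norm_rad, one_pow]

theorem measurable_vw (n : ℕ) : Measurable (vw p n) := by
  refine measurable_prod _ fun i _ => Measurable.pow_const ?_ _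
  refine (Measurable.const_mul ?_ _).div_const _ |>.cexp
  exact (measurable_from_top (f := fun z : ℤ => ((z % (p i : ℤ) : ℤ) : ℂ))).comp
    (measurable_id.mul_const _).floor

/-- The digit `x_{i+1}` of `x = ∑ x_j / m_j ∈ [0, 1)`, where `0 ≤ x_j < p_j`. -/
def vxdigit (p : ℕ → ℕ) (i : ℕ) (x : ℝ) : ℤ := ⌊x * (vm p (i + 1) : ℝ)⌋ % (p i : ℤ)

theorem floor_mul_vm_succ (i : ℕ) (x : ℝ) :
    ⌊x * (vm p (i + 1) : ℝ)⌋ = p i * ⌊x * (vm p i : ℝ)⌋ + vxdigit p i x := by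
  by_cases hpi : p i = 0
  · simp [vxdigit, vm, hpi]
  have : x * (vm p i : ℝ) = x * (vm p (i + 1) : ℝ) / (p i : ℕ) := by
    rw [vm, Nat.cast_mul]; field_simp
  rw [this, Int.floor_div_natCast, vxdigit, Int.mul_ediv_add_emod]

theorem rad_eq_zpow (i : ℕ) (x : ℝ) :
    rad p i x = Complex.exp (2 * Real.pi * Complex.I / p i) ^ vxdigit p i x := by
  rw [rad, ← Complex.exp_int_mul, vxdigit]
  ring_nf

theorem rad_mul_conj_rad {i : ℕ} (hpi : p i ≠ 0) (x y : ℝ) :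
    rad p i x * starRingEnd ℂ (rad p i y) =
      Complex.exp (2 * Real.pi * Complex.I / p i) ^ (vxdigit p i x - vxdigit p i y) := by
  have hζ := Complex.isPrimitiveRoot_exp (p i) hpi
  rw [rad_eq_zpow, rad_eq_zpow, map_zpow₀, ← RCLike.inv_eq_conj (hζ.norm'_eq_one hpi),
    inv_zpow', ← zpow_add₀ (hζ.ne_zero hpi), sub_eq_add_neg]

theorem geom_sum_rad_mul_conj_rad_eq_zero {i : ℕ} (hpi : p i ≠ 0) {x y : ℝ}
    (h : vxdigit p i x ≠ vxdigit p i y) :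
    ∑ a ∈ range (p i), (rad p i x * starRingEnd ℂ (rad p i y)) ^ a = 0 := by
  have hζ := Complex.isPrimitiveRoot_exp (p i) hpi
  rw [rad_mul_conj_rad hpi]
  set c := Complex.exp (2 * Real.pi * Complex.I / p i) ^ (vxdigit p i x - vxdigit p i y)
  have hc : c ≠ 1 := by
    have hp : (0 : ℤ) < p i := by omega
    have hx₀ := Int.emod_nonneg ⌊x * (vm p (i + 1) : ℝ)⌋ hp.ne'
    have hy₀ := Int.emod_nonneg ⌊y * (vm p (i + 1) : ℝ)⌋ hp.ne'
    have hx₁ := Int.emod_lt_of_pos ⌊x * (vm p (i + 1) : ℝ)⌋ hp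
    have hy₁ := Int.emod_lt_of_pos ⌊y * (vm p (i + 1) : ℝ)⌋ hp
    rw [Ne, hζ.zpow_eq_one_iff_dvd]
    intro hdvd
    refine h (sub_eq_zero.1 (Int.eq_zero_of_abs_lt_dvd hdvd (abs_sub_lt_iff.2 ?_)))
    unfold vxdigit
    constructor <;> omega
  have hcp : c ^ p i = 1 := by
    rw [← zpow_natCast, ← zpow_mul, mul_comm _ (p i : ℤ), zpow_mul, zpow_natCast, hζ.pow_eq_one,
      one_zpow]
  refine (mul_eq_zero.1 ?_).resolve_right (sub_ne_zero.2 hc)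
  rw [geom_sum_mul, hcp, sub_self]

/-- The Dirichlet kernel `D_{m_K}(x, y)` of the Vilenkin system. -/
def vdirichlet (p : ℕ → ℕ) (K : ℕ) (x y : ℝ) : ℂ :=
  ∑ j ∈ range (vm p K), vw p j x * starRingEnd ℂ (vw p j y)

theorem sum_Ico_vw_mul_conj_vw (hp : ∀ i, 2 ≤ p i) {K l : ℕ} (hl : l < p K) (x y : ℝ) :
    ∑ n ∈ Ico (l * vm p K) ((l + 1) * vm p K), vw p n x * starRingEnd ℂ (vw p n y) =
      (rad p K x * starRingEnd ℂ (rad p K y)) ^ l * vdirichlet p K x y := by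
  rw [sum_Ico_eq_sum_range, add_mul, one_mul, Nat.add_sub_cancel_left, vdirichlet, mul_sum]
  refine sum_congr rfl fun j hj => ?_
  rw [vw_mul_vm_add hp (mem_range.1 hj) hl, vw_mul_vm_add hp (mem_range.1 hj) hl, map_mul,
    map_pow]
  ring

theorem vdirichlet_succ (hp : ∀ i, 2 ≤ p i) (K : ℕ) (x y : ℝ) :
    vdirichlet p (K + 1) x y =
      vdirichlet p K x y * ∑ a ∈ range (p K), (rad p K x * starRingEnd ℂ (rad p K y)) ^ a := by
  rw [vdirichlet, vm, sum_range_mul_eq_sum_sum_Ico, mul_sum]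
  exact sum_congr rfl fun a ha => by
    rw [sum_Ico_vw_mul_conj_vw hp (mem_range.1 ha), mul_comm]

theorem vdirichlet_eq_zero (hp : ∀ i, 2 ≤ p i) {K : ℕ} {x y : ℝ} (h₀ : ⌊x⌋ = ⌊y⌋)
    (h : ⌊x * (vm p K : ℝ)⌋ ≠ ⌊y * (vm p K : ℝ)⌋) : vdirichlet p K x y = 0 := by
  induction K with
  | zero => simp [vm, h₀] at h
  | succ K ih =>
    rw [vdirichlet_succ hp]
    by_cases hK : ⌊x * (vm p K : ℝ)⌋ = ⌊y * (vm p K : ℝ)⌋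
    · have hpK : p K ≠ 0 := by linarith [hp K]
      refine mul_eq_zero_of_right _ (geom_sum_rad_mul_conj_rad_eq_zero hpK fun hd => h ?_)
      rw [floor_mul_vm_succ, floor_mul_vm_succ, hK, hd]
    · rw [ih hK, zero_mul]

theorem sum_vip_mul_vw_eq_integral {f : ℝ → ℂ}
    (hf : Integrable f (volume.restrict (Set.Ico 0 1))) (s : Finset ℕ) (x : ℝ) :
    ∑ n ∈ s, vip p f n * vw p n x =
      ∫ y in Set.Ico (0 : ℝ) 1, f y * ∑ n ∈ s, vw p n x * starRingEnd ℂ (vw p n y) := by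
  have hint : ∀ n, Integrable (fun y => f y * (vw p n x * starRingEnd ℂ (vw p n y)))
      (volume.restrict (Set.Ico 0 1)) := fun n =>
    hf.mul_bdd (c := 1)
      ((Complex.continuous_conj.measurable.comp (measurable_vw n)).const_mul _).aestronglyMeasurable
      (ae_of_all _ fun y => by rw [norm_mul, norm_vw, RCLike.norm_conj, norm_vw, one_mul])
  simp_rw [mul_sum]
  rw [integral_finsetSum s fun n _ => hint n]
  refine sum_congr rfl fun n _ => ?_
  rw [vip, ← integral_mul_const]
  congr 1 with y
  ring

theorem stmt_11_general (p : ℕ → ℕ) (hp : ∀ i, 2 ≤ p i) (k l : ℕ) (hl2 : l ≤ p (k-1) - 1) (S : Finset ℕ)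
    (e : Set ℝ) (he : e = ⋃ j ∈ S, Set.Ico ((j : ℝ) / vm p (k-1)) ((j + 1 : ℝ) / vm p (k-1)))
    (f : ℝ → ℂ) (hf : MemLp f 2 (volume.restrict (Set.Ico (0:ℝ) 1)))
    (hsupp : ∀ᵐ x, x ∈ Set.Ico (0:ℝ) 1 \ e → f x = 0) :
    ∀ x ∈ Set.Ico (0:ℝ) 1 \ e, vDkl p k l f x = 0 := by
  rintro x ⟨hx, hxe⟩
  have hl : l < p (k - 1) := by have := hp (k - 1); omega
  have hm : (0 : ℝ) < vm p (k - 1) := Nat.cast_pos.2 (vm_pos (fun i => by linarith [hp i]) _)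
  rw [vDkl, sum_vip_mul_vw_eq_integral (hf.integrable one_le_two)]
  refine integral_eq_zero_of_ae ?_
  filter_upwards [ae_restrict_mem measurableSet_Ico, ae_restrict_of_ae hsupp] with y hy hfy
  by_cases hye : y ∈ e
  · obtain ⟨j, hjS, hyj⟩ :
        ∃ j ∈ S, y ∈ Set.Ico ((j : ℝ) / vm p (k - 1)) ((j + 1 : ℝ) / vm p (k - 1)) := by
      simpa only [he, Set.mem_iUnion, exists_prop] using hye
    have hxy : ⌊x * (vm p (k - 1) : ℝ)⌋ ≠ ⌊y * (vm p (k - 1) : ℝ)⌋ := fun h => hxe <| by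
      rw [he]
      exact Set.mem_biUnion hjS ((mem_Ico_div_iff_floor_mul_eq hm j x).2
        (h.trans ((mem_Ico_div_iff_floor_mul_eq hm j y).1 hyj)))
    have h₀ : ⌊x⌋ = ⌊y⌋ := by rw [Int.floor_eq_zero_iff.2 hx, Int.floor_eq_zero_iff.2 hy]
    simp [sum_Ico_vw_mul_conj_vw hp hl, vdirichlet_eq_zero hp h₀ hxy]
  · simp [hfy ⟨hy, hye⟩]

/-- if `f` is supported (a.e.) in a set `e ∈ F_{k-1}` (a union of atoms of
`F_{k-1}`), then `Δ_{k,l} f` vanishes outside `e`, for every `1 ≤ l ≤ p_k - 1`. -/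
theorem stmt_11 (p : ℕ → ℕ) (hp : ∀ i, 2 ≤ p i) (k l : ℕ) (hk : 1 ≤ k)
    (hl1 : 1 ≤ l) (hl2 : l ≤ p (k-1) - 1)
    (S : Finset ℕ) (hS : ∀ j ∈ S, j < vm p (k-1))
    (e : Set ℝ) (he : e = ⋃ j ∈ S, Set.Ico ((j : ℝ) / vm p (k-1)) ((j + 1 : ℝ) / vm p (k-1)))
    (f : ℝ → ℂ) (hf : MemLp f 2 (volume.restrict (Set.Ico (0:ℝ) 1)))
    (hsupp : ∀ᵐ x, x ∈ Set.Ico (0:ℝ) 1 \ e → f x = 0) :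
    ∀ x ∈ Set.Ico (0:ℝ) 1 \ e, vDkl p k l f x = 0 :=
  stmt_11_general p hp k l hl2 S e he f hf hsupp
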